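/- arXiv:2410.06442 — 2 statements merged into one kernel-verified Lean document; each statement's English description precedes it below -/
import Mathlib

section
/- Let X and Y be measurable spaces equipped with σ-finite measures μ and ν, and let π be a joint probability density on X×Y with respect to μ⊗ν, with x-marginal π_X and conditional densities π(y|x). Let Q be a measurably parameterized family of joint probability densities on X×Y, each of whose x-marginal equals π_X for μ-almost every x. Let (Π_n) be a sequence of probability measures on Q such that for every δ > 0, Π_n({q ∈ Q : H(π, q) > δ}) → 0 as n → ∞, where H is the Hellinger distance between joint densities. Then the posterior predictive conditional densities π_n(y|x) = ∫_Q q(y|x) dΠ_n(q) satisfy ∫_X π_X(x) · H(π_n(·|x), π(·|x)) dμ(x) → 0 as n → ∞. -/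
open MeasureTheory Filter

/-!
Where `π_X(x) > 0`, almost every `q_i` has `x`-marginal `π_X(x)`, so the predictive conditional
is `(∫ q_i(x, ·) dΠ) / π_X(x)` and
`π_X(x) · H(π_n(·|x), π(·|x)) = √π_X(x) · H(∫ q_i(x, ·) dΠ, π(x, ·))`.
Since `t ↦ (√t - √b)²` is convex, Jensen's inequality gives `H(∫ q_i dΠ, π)² ≤ ∫ H(q_i, π)² dΠ`
on each slice, and Cauchy–Schwarz in `x` then bounds the expected conditional distance by
`(∫ H(q_i, π)² dΠ_n(i))^{1/2}`. As `H² ≤ 2`, this tends to zero once `Π_n(H > δ) → 0` for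
every `δ > 0`.
-/

/-- Hellinger distance between two densities `p`, `q` with respect to a measure `m`:
`H(p,q) = (∫ (√p − √q)² dm)^{1/2}`. -/
noncomputable def hell {Z : Type*} [MeasurableSpace Z] (m : Measure Z) (p q : Z → ℝ) : ℝ :=
  Real.sqrt (∫ z, (Real.sqrt (p z) - Real.sqrt (q z)) ^ 2 ∂m)

section

variable {α : Type*} [MeasurableSpace α] {μ : Measure α}

lemma memLp_two_sqrt {f : α → ℝ} (hf : Integrable f μ) (hf0 : 0 ≤ᵐ[μ] f) :
    MemLp (fun a => √(f a)) 2 μ :=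
  (memLp_two_iff_integrable_sq
    (Real.continuous_sqrt.comp_aestronglyMeasurable hf.aestronglyMeasurable)).2 <|
    hf.congr <| by filter_upwards [hf0] with a ha; rw [Real.sq_sqrt ha]

lemma integrable_sqrt_mul_sqrt {f g : α → ℝ} (hf : Integrable f μ) (hg : Integrable g μ)
    (hf0 : 0 ≤ᵐ[μ] f) (hg0 : 0 ≤ᵐ[μ] g) : Integrable (fun a => √(f a) * √(g a)) μ :=
  (memLp_two_sqrt hf hf0).integrable_mul (memLp_two_sqrt hg hg0)

lemma integral_sqrt_mul_sqrt_le {f g : α → ℝ} (hf : Integrable f μ) (hg : Integrable g μ)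
    (hf0 : 0 ≤ᵐ[μ] f) (hg0 : 0 ≤ᵐ[μ] g) :
    ∫ a, √(f a) * √(g a) ∂μ ≤ √(∫ a, f a ∂μ) * √(∫ a, g a ∂μ) := by
  have hsq : ∀ {h : α → ℝ}, 0 ≤ᵐ[μ] h →
      (∫ a, √(h a) ^ (2 : ℝ) ∂μ) ^ (1 / (2 : ℝ)) = √(∫ a, h a ∂μ) := fun {h} h0 => by
    rw [Real.sqrt_eq_rpow, one_div]
    congr 1
    refine integral_congr_ae ?_
    filter_upwards [h0] with a ha
    rw [Real.rpow_two, Real.sq_sqrt ha]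
  rw [← hsq hf0, ← hsq hg0]
  exact integral_mul_le_Lp_mul_Lq_of_nonneg Real.HolderConjugate.two_two
    (ae_of_all _ fun _ => Real.sqrt_nonneg _) (ae_of_all _ fun _ => Real.sqrt_nonneg _)
    (by simpa using memLp_two_sqrt hf hf0) (by simpa using memLp_two_sqrt hg hg0)

lemma integrable_prod_of_integral_le {β : Type*} [MeasurableSpace β] [IsFiniteMeasure μ]
    {ν : Measure β} [SFinite ν] {F : α × β → ℝ} (hF : AEStronglyMeasurable F (μ.prod ν))
    (hF0 : ∀ w, 0 ≤ F w) {C : ℝ} (hsec : ∀ᵐ a ∂μ, Integrable (fun b => F (a, b)) ν)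
    (hC : ∀ᵐ a ∂μ, ∫ b, F (a, b) ∂ν ≤ C) : Integrable F (μ.prod ν) := by
  refine (integrable_prod_iff hF).2
    ⟨hsec, (integrable_const C).mono' hF.norm.integral_prod_right' ?_⟩
  filter_upwards [hC] with a ha
  have hnorm : ∀ b, ‖F (a, b)‖ = F (a, b) := fun b => Real.norm_of_nonneg (hF0 _)
  simp only [hnorm]
  rwa [Real.norm_of_nonneg (integral_nonneg fun b => hF0 (a, b))]

lemma convexOn_sqrt_sub_sqrt_sq (b : ℝ) : ConvexOn ℝ (Set.Ici 0) fun t => (√t - √b) ^ 2 := by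
  refine (((convexOn_id (convex_Ici 0)).add
    (Real.strictConcaveOn_sqrt.concaveOn.neg.smul (by positivity : (0 : ℝ) ≤ 2 * √b))).add_const
    (√b ^ 2)).congr fun t ht => ?_
  simp only [Pi.add_apply, Pi.neg_apply, id, smul_eq_mul]
  rw [sub_sq, Real.sq_sqrt (Set.mem_Ici.1 ht)]
  ring

lemma sqrt_sub_sqrt_sq_le {a b : ℝ} (ha : 0 ≤ a) (hb : 0 ≤ b) : (√a - √b) ^ 2 ≤ a + b := by
  nlinarith [Real.sq_sqrt ha, Real.sq_sqrt hb,
    mul_nonneg (Real.sqrt_nonneg a) (Real.sqrt_nonneg b)]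

lemma integrable_sqrt_sub_sqrt_sq {f g : α → ℝ} (hf : Integrable f μ) (hg : Integrable g μ)
    (hf0 : ∀ a, 0 ≤ f a) (hg0 : ∀ a, 0 ≤ g a) :
    Integrable (fun a => (√(f a) - √(g a)) ^ 2) μ :=
  (hf.add hg).mono'
    (((Real.continuous_sqrt.comp_aestronglyMeasurable hf.aestronglyMeasurable).sub
      (Real.continuous_sqrt.comp_aestronglyMeasurable hg.aestronglyMeasurable)).pow 2) <|
    ae_of_all _ fun a => by
      rw [Real.norm_of_nonneg (sq_nonneg _)]
      exact sqrt_sub_sqrt_sq_le (hf0 a) (hg0 a)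

lemma sqrt_integral_sub_sqrt_sq_le [IsProbabilityMeasure μ] {f : α → ℝ} (hf : Integrable f μ)
    (hf0 : ∀ a, 0 ≤ f a) {b : ℝ} (hb : 0 ≤ b) :
    (√(∫ a, f a ∂μ) - √b) ^ 2 ≤ ∫ a, (√(f a) - √b) ^ 2 ∂μ :=
  (convexOn_sqrt_sub_sqrt_sq b).map_integral_le
    ((Real.continuous_sqrt.sub continuous_const).pow 2).continuousOn isClosed_Ici
    (ae_of_all _ hf0) hf (integrable_sqrt_sub_sqrt_sq hf (integrable_const b) hf0 fun _ => hb)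

end

section

variable {Z : Type*} [MeasurableSpace Z] {m : Measure Z}

lemma hell_nonneg (p q : Z → ℝ) : 0 ≤ hell m p q := Real.sqrt_nonneg _

lemma hell_sq (p q : Z → ℝ) :
    hell m p q ^ 2 = ∫ z, (√(p z) - √(q z)) ^ 2 ∂m :=
  Real.sq_sqrt (integral_nonneg fun _ => sq_nonneg _)

lemma hell_comm (p q : Z → ℝ) : hell m p q = hell m q p := by
  simp only [hell, ← neg_sub (√(q _)), neg_sq]

lemma hell_sq_le_two {p q : Z → ℝ} (hp0 : ∀ z, 0 ≤ p z) (hq0 : ∀ z, 0 ≤ q z)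
    (hp1 : ∫ z, p z ∂m = 1) (hq1 : ∫ z, q z ∂m = 1) : hell m p q ^ 2 ≤ 2 := by
  have hp : Integrable p m := .of_integral_ne_zero (by simp [hp1])
  have hq : Integrable q m := .of_integral_ne_zero (by simp [hq1])
  calc hell m p q ^ 2 ≤ ∫ z, (p z + q z) ∂m := by
        rw [hell_sq]
        exact integral_mono (integrable_sqrt_sub_sqrt_sq hp hq hp0 hq0) (hp.add hq)
          fun z => sqrt_sub_sqrt_sq_le (hp0 z) (hq0 z)
    _ = 2 := by rw [integral_add hp hq, hp1, hq1]; norm_num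

lemma mul_hell_div_const {c : ℝ} (hc : 0 ≤ c) (p q : Z → ℝ) :
    c * hell m (fun z => p z / c) (fun z => q z / c) = √c * hell m p q := by
  have hterm : ∀ z, (√(p z / c) - √(q z / c)) ^ 2 = (√(p z) - √(q z)) ^ 2 / c := fun z => by
    rw [Real.sqrt_div' _ hc, Real.sqrt_div' _ hc, div_sub_div_same, div_pow, Real.sq_sqrt hc]
  rw [hell, hell, integral_congr_ae (ae_of_all _ hterm), integral_div, Real.sqrt_div' _ hc,
    mul_div_left_comm, Real.div_sqrt, mul_comm]

lemma Measurable.hell [SFinite m] {A : Type*} [MeasurableSpace A] {p q : A → Z → ℝ}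
    (hp : Measurable (Function.uncurry p)) (hq : Measurable (Function.uncurry q)) :
    Measurable fun a => _root_.hell m (p a) (q a) :=
  (StronglyMeasurable.integral_prod_right (f := fun a z => (√(p a z) - √(q a z)) ^ 2)
    ((hp.sqrt.sub hq.sqrt).pow_const 2).stronglyMeasurable).measurable.sqrt

lemma hell_sq_integral_le [SFinite m] {Q : Type*} [MeasurableSpace Q] (P : Measure Q)
    [IsProbabilityMeasure P] {f : Q → Z → ℝ} (hf : Integrable (Function.uncurry f) (P.prod m))
    (hf0 : ∀ i z, 0 ≤ f i z) {g : Z → ℝ} (hg : Integrable g m) (hg0 : ∀ z, 0 ≤ g z) :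
    hell m (fun z => ∫ i, f i z ∂P) g ^ 2 ≤ ∫ i, hell m (f i) g ^ 2 ∂P := by
  have hs : Integrable (fun w : Q × Z => (√(f w.1 w.2) - √(g w.2)) ^ 2) (P.prod m) :=
    integrable_sqrt_sub_sqrt_sq hf (hg.comp_snd P) (fun w => hf0 w.1 w.2) fun w => hg0 w.2
  calc hell m (fun z => ∫ i, f i z ∂P) g ^ 2
      = ∫ z, (√(∫ i, f i z ∂P) - √(g z)) ^ 2 ∂m := hell_sq _ _
    _ ≤ ∫ z, ∫ i, (√(f i z) - √(g z)) ^ 2 ∂P ∂m := by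
        refine integral_mono_ae (integrable_sqrt_sub_sqrt_sq hf.integral_prod_right hg
          (fun z => integral_nonneg fun i => hf0 i z) hg0) hs.integral_prod_right ?_
        filter_upwards [hf.prod_left_ae] with z hz
        exact sqrt_integral_sub_sqrt_sq_le hz (fun i => hf0 i z) (hg0 z)
    _ = ∫ i, hell m (f i) g ^ 2 ∂P := by
        rw [← integral_integral_swap hs]
        simp only [hell_sq]

end

lemma integrable_hell_sq_section {X Y : Type*} [MeasurableSpace X] [MeasurableSpace Y]
    {μ : Measure X} {ν : Measure Y} [SFinite ν] {p q : X × Y → ℝ}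
    (hp : Integrable p (μ.prod ν)) (hq : Integrable q (μ.prod ν))
    (hp0 : ∀ z, 0 ≤ p z) (hq0 : ∀ z, 0 ≤ q z) :
    Integrable (fun x => hell ν (fun y => p (x, y)) (fun y => q (x, y)) ^ 2) μ := by
  simp only [hell_sq]
  exact (integrable_sqrt_sub_sqrt_sq hp hq hp0 hq0).integral_prod_left

lemma hell_prod_sq {X Y : Type*} [MeasurableSpace X] [MeasurableSpace Y]
    {μ : Measure X} {ν : Measure Y} [SFinite μ] [SFinite ν] {p q : X × Y → ℝ}
    (hp : Integrable p (μ.prod ν)) (hq : Integrable q (μ.prod ν))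
    (hp0 : ∀ z, 0 ≤ p z) (hq0 : ∀ z, 0 ≤ q z) :
    hell (μ.prod ν) p q ^ 2 = ∫ x, hell ν (fun y => p (x, y)) (fun y => q (x, y)) ^ 2 ∂μ := by
  simp only [hell_sq]
  exact integral_prod _ (integrable_sqrt_sub_sqrt_sq hp hq hp0 hq0)

lemma tendsto_integral_of_tendsto_measure_lt {Q ι : Type*} [MeasurableSpace Q] {l : Filter ι}
    {P : ι → Measure Q} [∀ n, IsProbabilityMeasure (P n)] {f : Q → ℝ} (hf : Measurable f)
    (hf0 : ∀ i, 0 ≤ f i) {C : ℝ} (hfC : ∀ i, f i ≤ C)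
    (h : ∀ δ, 0 < δ → Tendsto (fun n => P n {i | δ < f i}) l (nhds 0)) :
    Tendsto (fun n => ∫ i, f i ∂P n) l (nhds 0) := by
  have hbound : ∀ n δ, 0 ≤ δ → ∫ i, f i ∂P n ≤ δ + C * (P n).real {i | δ < f i} := by
    intro n δ hδ
    have hs : MeasurableSet {i | δ < f i} := measurableSet_lt measurable_const hf
    have hfi : Integrable f (P n) := .of_bound hf.aestronglyMeasurable C <|
      ae_of_all _ fun i => by rw [Real.norm_of_nonneg (hf0 i)]; exact hfC i
    have hind : Integrable ({i | δ < f i}.indicator (1 : Q → ℝ)) (P n) :=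
      (integrable_const 1).indicator hs
    calc ∫ i, f i ∂P n ≤ ∫ i, (δ + C * {i | δ < f i}.indicator 1 i) ∂P n := by
          refine integral_mono hfi ((integrable_const δ).add (hind.const_mul C)) fun i => ?_
          by_cases hi : δ < f i
          · simpa [hi] using (hfC i).trans (le_add_of_nonneg_left hδ)
          · simpa [hi] using le_of_not_gt hi
      _ = δ + C * (P n).real {i | δ < f i} := by
          rw [integral_add (integrable_const δ) (hind.const_mul C), integral_const_mul,
            integral_indicator_one hs]
          simp
  refine tendsto_order.2 ⟨fun a ha => Eventually.of_forall fun n =>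
    ha.trans_le (integral_nonneg hf0), fun ε hε => ?_⟩
  have hreal : Tendsto (fun n => C * (P n).real {i | ε / 2 < f i}) l (nhds 0) := by
    simpa [Measure.real] using ((ENNReal.tendsto_toReal ENNReal.zero_ne_top).comp
      (h (ε / 2) (half_pos hε))).const_mul C
  filter_upwards [hreal.eventually_lt_const (half_pos hε)] with n hn
  linarith [hbound n (ε / 2) (half_pos hε).le]

section

variable {X Y Q : Type*} [MeasurableSpace X] [MeasurableSpace Y] [MeasurableSpace Q]
  {μ : Measure X} {ν : Measure Y} [SFinite μ] [SFinite ν]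
  {ptrue : X × Y → ℝ} {pX : X → ℝ} {q : Q → X × Y → ℝ}

lemma ae_mul_hell_predictive_le (P : Measure Q) [IsProbabilityMeasure P]
    (hπm : Measurable ptrue) (hπ0 : ∀ z, 0 ≤ ptrue z) (hπ : Integrable ptrue (μ.prod ν))
    (hpX : ∀ x, pX x = ∫ y, ptrue (x, y) ∂ν)
    (hqm : Measurable (Function.uncurry q)) (hq0 : ∀ i z, 0 ≤ q i z)
    (hqmarg : ∀ i, ∀ᵐ x ∂μ, (∫ y, q i (x, y) ∂ν) = pX x) :
    ∀ᵐ x ∂μ, pX x * hell ν (fun y => ∫ i, q i (x, y) / (∫ y', q i (x, y') ∂ν) ∂P)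
        (fun y => ptrue (x, y) / pX x) ≤
      √(pX x) * √(∫ i, hell ν (fun y => q i (x, y)) (fun y => ptrue (x, y)) ^ 2 ∂P) := by
  have hpXm : Measurable pX := by
    rw [funext hpX]
    exact hπm.stronglyMeasurable.integral_prod_right'.measurable
  have hmarg : ∀ᵐ x ∂μ, ∀ᵐ i ∂P, ∫ y, q i (x, y) ∂ν = pX x := by
    refine (Measure.ae_ae_comm (p := fun i x => ∫ y, q i (x, y) ∂ν = pX x)
      (measurableSet_eq_fun ?_ (hpXm.comp measurable_snd))).1 (ae_of_all _ hqmarg)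
    exact (StronglyMeasurable.integral_prod_right (f := fun (w : Q × X) y => q w.1 (w.2, y))
      (hqm.comp (f := fun r : (Q × X) × Y => (r.1.1, (r.1.2, r.2)))
        (by fun_prop)).stronglyMeasurable).measurable
  filter_upwards [hmarg, hπ.prod_right_ae] with x hx hπx
  have hpX0 : 0 ≤ pX x := hpX x ▸ integral_nonneg fun y => hπ0 _
  rcases hpX0.eq_or_lt with h0 | hpos
  · rw [← h0, zero_mul]
    positivity
  have hpred : (fun y => ∫ i, q i (x, y) / (∫ y', q i (x, y') ∂ν) ∂P) =
      fun y => (∫ i, q i (x, y) ∂P) / pX x := by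
    funext y
    rw [← integral_div]
    exact integral_congr_ae (hx.mono fun i hi => by simp only [hi])
  have hqx : Integrable (fun w : Q × Y => q w.1 (x, w.2)) (P.prod ν) :=
    integrable_prod_of_integral_le
      (hqm.comp (f := fun w : Q × Y => (w.1, (x, w.2))) (by fun_prop)).aestronglyMeasurable
      (fun w => hq0 _ _) (hx.mono fun i hi => .of_integral_ne_zero (hi ▸ hpos.ne'))
      (hx.mono fun i hi => hi.le)
  rw [hpred, mul_hell_div_const hpX0]
  gcongr
  rw [Real.le_sqrt (hell_nonneg _ _) (integral_nonneg fun i => sq_nonneg _)]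
  exact hell_sq_integral_le P (f := fun i y => q i (x, y)) hqx (fun i y => hq0 _ _) hπx
    fun y => hπ0 _

lemma integrable_hell_sq_section_prod (P : Measure Q) [IsFiniteMeasure P]
    (hπm : Measurable ptrue) (hπ0 : ∀ z, 0 ≤ ptrue z) (hπ1 : ∫ z, ptrue z ∂(μ.prod ν) = 1)
    (hqm : Measurable (Function.uncurry q)) (hq0 : ∀ i z, 0 ≤ q i z)
    (hq1 : ∀ i, ∫ z, q i z ∂(μ.prod ν) = 1) :
    Integrable (fun w : Q × X => hell ν (fun y => q w.1 (w.2, y)) (fun y => ptrue (w.2, y)) ^ 2)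
      (P.prod μ) := by
  have hπ : Integrable ptrue (μ.prod ν) := .of_integral_ne_zero (by simp [hπ1])
  have hq : ∀ i, Integrable (q i) (μ.prod ν) := fun i => .of_integral_ne_zero (by simp [hq1 i])
  have hm : Measurable fun w : Q × X =>
      hell ν (fun y => q w.1 (w.2, y)) (fun y => ptrue (w.2, y)) :=
    Measurable.hell (p := fun (w : Q × X) y => q w.1 (w.2, y))
      (q := fun (w : Q × X) y => ptrue (w.2, y))
      (hqm.comp (f := fun r : (Q × X) × Y => (r.1.1, (r.1.2, r.2))) (by fun_prop))
      (hπm.comp (f := fun r : (Q × X) × Y => (r.1.2, r.2)) (by fun_prop))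
  have hsec : ∀ i, Integrable
      (fun x => hell ν (fun y => q i (x, y)) (fun y => ptrue (x, y)) ^ 2) μ :=
    fun i => integrable_hell_sq_section (hq i) hπ (hq0 i) hπ0
  have hbound : ∀ i, ∫ x, hell ν (fun y => q i (x, y)) (fun y => ptrue (x, y)) ^ 2 ∂μ ≤ 2 :=
    fun i => hell_prod_sq (hq i) hπ (hq0 i) hπ0 ▸ hell_sq_le_two (hq0 i) hπ0 (hq1 i) hπ1
  exact integrable_prod_of_integral_le (C := 2) (hm.pow_const 2).aestronglyMeasurable
    (fun w => sq_nonneg _) (ae_of_all _ hsec) (ae_of_all _ hbound)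

lemma integral_mul_hell_predictive_le (P : Measure Q) [IsProbabilityMeasure P]
    (hπm : Measurable ptrue) (hπ0 : ∀ z, 0 ≤ ptrue z) (hπ1 : ∫ z, ptrue z ∂(μ.prod ν) = 1)
    (hpX : ∀ x, pX x = ∫ y, ptrue (x, y) ∂ν)
    (hqm : Measurable (Function.uncurry q)) (hq0 : ∀ i z, 0 ≤ q i z)
    (hq1 : ∀ i, ∫ z, q i z ∂(μ.prod ν) = 1)
    (hqmarg : ∀ i, ∀ᵐ x ∂μ, (∫ y, q i (x, y) ∂ν) = pX x) :
    ∫ x, pX x * hell ν (fun y => ∫ i, q i (x, y) / (∫ y', q i (x, y') ∂ν) ∂P)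
        (fun y => ptrue (x, y) / pX x) ∂μ ≤
      √(∫ i, hell (μ.prod ν) (q i) ptrue ^ 2 ∂P) := by
  have hπ : Integrable ptrue (μ.prod ν) := .of_integral_ne_zero (by simp [hπ1])
  have hq : ∀ i, Integrable (q i) (μ.prod ν) := fun i => .of_integral_ne_zero (by simp [hq1 i])
  have hpX0 : ∀ x, 0 ≤ pX x := fun x => hpX x ▸ integral_nonneg fun y => hπ0 _
  have hpXi : Integrable pX μ := funext hpX ▸ hπ.integral_prod_left
  have hpX1 : ∫ x, pX x ∂μ = 1 := by rw [funext hpX, ← integral_prod _ hπ, hπ1]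
  have hK := integrable_hell_sq_section_prod P hπm hπ0 hπ1 hqm hq0 hq1 (μ := μ)
  have hL0 :
      0 ≤ᵐ[μ] fun x => ∫ i, hell ν (fun y => q i (x, y)) (fun y => ptrue (x, y)) ^ 2 ∂P :=
    ae_of_all _ fun x => integral_nonneg fun i => sq_nonneg _
  calc _ ≤ ∫ x, √(pX x) *
          √(∫ i, hell ν (fun y => q i (x, y)) (fun y => ptrue (x, y)) ^ 2 ∂P) ∂μ :=
        integral_mono_of_nonneg (ae_of_all _ fun x => mul_nonneg (hpX0 x) (hell_nonneg _ _))
          (integrable_sqrt_mul_sqrt hpXi hK.integral_prod_right (ae_of_all _ hpX0) hL0)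
          (ae_mul_hell_predictive_le P hπm hπ0 hπ hpX hqm hq0 hqmarg)
    _ ≤ √(∫ x, pX x ∂μ) *
          √(∫ x, ∫ i, hell ν (fun y => q i (x, y)) (fun y => ptrue (x, y)) ^ 2 ∂P ∂μ) :=
        integral_sqrt_mul_sqrt_le hpXi hK.integral_prod_right (ae_of_all _ hpX0) hL0
    _ = √(∫ i, hell (μ.prod ν) (q i) ptrue ^ 2 ∂P) := by
        rw [hpX1, Real.sqrt_one, one_mul,
          ← integral_integral_swap (f := fun i x => hell ν (fun y => q i (x, y))
            (fun y => ptrue (x, y)) ^ 2) hK]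
        simp only [← hell_prod_sq (hq _) hπ (hq0 _) hπ0]

end

/-- Posterior consistency implies convergence of the posterior
predictive to the true conditional in expected Hellinger distance: let `π` be a joint
probability density on `X × Y` with x-marginal `π_X` and conditionals
`π(y|x) = π(x,y)/π_X(x)`; let `q` be a measurably parameterized family of joint
probability densities, each with x-marginal equal to `π_X` μ-a.e., and let `(Π_n)` be
probability measures on the parameter space with
`Π_n({i : H(π, q_i) > δ}) → 0` for every `δ > 0`.  Then the posterior predictive
conditional densities `π_n(y|x) = ∫ q_i(y|x) dΠ_n(i)` (with
`q_i(y|x) = q_i(x,y)/q_{i,X}(x)`) satisfy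
`∫ π_X(x) · H(π_n(·|x), π(·|x)) dμ(x) → 0`. -/
theorem stmt2 {X Y Q : Type*}
    [MeasurableSpace X] [MeasurableSpace Y] [MeasurableSpace Q]
    (μ : Measure X) (ν : Measure Y) [SigmaFinite μ] [SigmaFinite ν]
    (ptrue : X × Y → ℝ)
    (hπm : Measurable ptrue) (hπ0 : ∀ z, 0 ≤ ptrue z)
    (hπ1 : ∫ z, ptrue z ∂(μ.prod ν) = 1)
    (pX : X → ℝ) (hpX : ∀ x, pX x = ∫ y, ptrue (x, y) ∂ν)
    (q : Q → X × Y → ℝ)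
    (hqm : Measurable (Function.uncurry q))
    (hq0 : ∀ i z, 0 ≤ q i z)
    (hq1 : ∀ i, ∫ z, q i z ∂(μ.prod ν) = 1)
    (hqmarg : ∀ i, ∀ᵐ x ∂μ, (∫ y, q i (x, y) ∂ν) = pX x)
    (Pn : ℕ → Measure Q) (hprob : ∀ n, IsProbabilityMeasure (Pn n))
    (hcons : ∀ δ : ℝ, 0 < δ →
      Tendsto (fun n => Pn n {i | δ < hell (μ.prod ν) ptrue (q i)}) atTop (nhds 0)) :
    Tendsto (fun n => ∫ x, pX x *
        hell ν (fun y => ∫ i, q i (x, y) / (∫ y', q i (x, y') ∂ν) ∂(Pn n))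
               (fun y => ptrue (x, y) / pX x) ∂μ) atTop (nhds 0) := by
  have hH : Tendsto (fun n => ∫ i, hell (μ.prod ν) (q i) ptrue ^ 2 ∂Pn n) atTop (nhds 0) := by
    refine tendsto_integral_of_tendsto_measure_lt
      ((hqm.hell (q := fun _ => ptrue) (hπm.comp measurable_snd)).pow_const 2)
      (fun i => sq_nonneg _) (fun i => hell_sq_le_two (hq0 i) hπ0 (hq1 i) hπ1) fun δ hδ => ?_
    have hset : {i | δ < hell (μ.prod ν) (q i) ptrue ^ 2} =
        {i | √δ < hell (μ.prod ν) ptrue (q i)} := by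
      ext i
      change δ < _ ↔ √δ < _
      rw [hell_comm, Real.sqrt_lt hδ.le (hell_nonneg _ _)]
    rw [hset]
    exact hcons √δ (Real.sqrt_pos.2 hδ)
  refine squeeze_zero (fun n => integral_nonneg fun x => ?_)
    (fun n => integral_mul_hell_predictive_le (Pn n) hπm hπ0 hπ1 hpX hqm hq0 hq1 hqmarg) ?_
  · exact mul_nonneg (hpX x ▸ integral_nonneg fun y => hπ0 _) (hell_nonneg _ _)
  · simpa using hH.sqrt
end

section
/- Let X and Y be measurable spaces equipped with σ-finite measures μ and ν, and let π be a joint probability density on X×Y with respect to μ⊗ν, with x-marginal π_X and conditional densities π(y|x). Let Q be a measurably parameterized family of joint probability densities on X×Y, each of whose x-marginal equals π_X for μ-almost every x, and let Π be a probability measure on Q. Define π_Π(y|x) = ∫_Q q(y|x) dΠ(q). Then ∫_X π_X(x) · H(π_Π(·|x), π(·|x)) dμ(x) ≤ ( ∫_Q H(q, π)² dΠ(q) )^{1/2}, where the Hellinger distance on the left is between conditional densities with respect to ν and on the right between joint densities with respect to μ⊗ν. -/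
open MeasureTheory Filter

open ENNReal

lemma two_conj : (2:ℝ).HolderConjugate 2 := Real.HolderConjugate.two_two

lemma lintegral_rpow_half_le {Z : Type*} [MeasurableSpace Z] (P : Measure Z)
    [IsProbabilityMeasure P] {F : Z → ℝ≥0∞} (hF : AEMeasurable F P) :
    ∫⁻ z, F z ^ (1/2 : ℝ) ∂P ≤ (∫⁻ z, F z ∂P) ^ (1/2 : ℝ) := by
  have h := ENNReal.lintegral_mul_le_Lp_mul_Lq P two_conj (hF.pow_const (1/2:ℝ))
      (aemeasurable_const (b := (1:ℝ≥0∞)))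
  simp only [Pi.mul_apply, mul_one, ENNReal.one_rpow, lintegral_one,
    measure_univ, ENNReal.one_rpow, mul_one] at h
  calc ∫⁻ z, F z ^ (1/2:ℝ) ∂P ≤ (∫⁻ z, (F z ^ (1/2:ℝ)) ^ (2:ℝ) ∂P) ^ (1/(2:ℝ)) * 1 := by
        simpa using h
    _ = (∫⁻ z, F z ∂P) ^ (1/2:ℝ) := by
        rw [mul_one]
        congr 1
        refine lintegral_congr fun z => ?_
        rw [← ENNReal.rpow_mul]
        norm_num

lemma sqrt_le_add_one {t : ℝ} (ht : 0 ≤ t) : Real.sqrt t ≤ t + 1 := by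
  nlinarith [Real.sq_sqrt ht, Real.sqrt_nonneg t, sq_nonneg (Real.sqrt t - 1)]

lemma integrable_sqrt' {Z : Type*} [MeasurableSpace Z] {P : Measure Z}
    [IsProbabilityMeasure P] {f : Z → ℝ} (hm : Measurable f) (h0 : ∀ i, 0 ≤ f i)
    (hi : Integrable f P) : Integrable (fun i => Real.sqrt (f i)) P := by
  refine (hi.add (integrable_const 1)).mono hm.sqrt.aestronglyMeasurable ?_
  filter_upwards with i
  show ‖Real.sqrt (f i)‖ ≤ ‖f i + 1‖
  rw [Real.norm_of_nonneg (Real.sqrt_nonneg _), Real.norm_of_nonneg (by nlinarith [h0 i])]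
  exact sqrt_le_add_one (h0 i)

lemma integral_sqrt_le {Z : Type*} [MeasurableSpace Z] (P : Measure Z)
    [IsProbabilityMeasure P] {f : Z → ℝ} (hm : Measurable f) (h0 : ∀ i, 0 ≤ f i)
    (hi : Integrable f P) :
    ∫ z, Real.sqrt (f z) ∂P ≤ Real.sqrt (∫ z, f z ∂P) := by
  have key := lintegral_rpow_half_le P (hm.ennreal_ofReal.aemeasurable (μ := P))
  have e1 : ∀ z, (ENNReal.ofReal (f z)) ^ (1/2:ℝ) = ENNReal.ofReal (Real.sqrt (f z)) := by
    intro z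
    rw [Real.sqrt_eq_rpow, ENNReal.ofReal_rpow_of_nonneg (h0 z) (by norm_num)]
  have hLfin : ∫⁻ z, ENNReal.ofReal (f z) ∂P ≠ ⊤ := by
    rw [← ofReal_integral_eq_lintegral_ofReal hi (Eventually.of_forall h0)]
    exact ENNReal.ofReal_ne_top
  have lhs_eq : ∫ z, Real.sqrt (f z) ∂P
      = (∫⁻ z, (ENNReal.ofReal (f z)) ^ (1/2:ℝ) ∂P).toReal := by
    rw [integral_eq_lintegral_of_nonneg_ae (Eventually.of_forall fun z => Real.sqrt_nonneg _)
      hm.sqrt.aestronglyMeasurable]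
    congr 1
    exact lintegral_congr fun z => (e1 z).symm
  have rhs_eq : Real.sqrt (∫ z, f z ∂P)
      = ((∫⁻ z, ENNReal.ofReal (f z) ∂P) ^ (1/2:ℝ)).toReal := by
    rw [integral_eq_lintegral_of_nonneg_ae (Eventually.of_forall h0)
      hm.aestronglyMeasurable, Real.sqrt_eq_rpow, ENNReal.toReal_rpow]
  rw [lhs_eq, rhs_eq]
  exact ENNReal.toReal_mono (ENNReal.rpow_ne_top_of_nonneg (by norm_num) hLfin) key

lemma mix_step {Q : Type*} [MeasurableSpace Q] (Pi : Measure Q) [IsProbabilityMeasure Pi]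
    {f : Q → ℝ} {c : Q → ℝ} {u b : ℝ} (hb : 0 ≤ b) (hu : 0 ≤ u)
    (hf0 : ∀ i, 0 ≤ f i) (hfm : Measurable f)
    (hcu : ∀ᵐ i ∂Pi, c i = u)
    (hfint : ∫⁻ i, ENNReal.ofReal (f i) ∂Pi < ⊤) :
    ENNReal.ofReal u *
      ENNReal.ofReal ((Real.sqrt (∫ i, f i / c i ∂Pi) - Real.sqrt (b / u)) ^ 2)
      ≤ ∫⁻ i, ENNReal.ofReal ((Real.sqrt (f i) - Real.sqrt b) ^ 2) ∂Pi := by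
  rcases eq_or_lt_of_le hu with hu0 | hu0
  · simp [← hu0]
  -- f is integrable
  have hint : Integrable f Pi :=
    ⟨hfm.aestronglyMeasurable, (hasFiniteIntegral_iff_ofReal (Eventually.of_forall hf0)).2 hfint⟩
  set A := ∫ i, f i ∂Pi with hA
  have hA0 : 0 ≤ A := integral_nonneg hf0
  -- mixture value
  have hmixval : ∫ i, f i / c i ∂Pi = A / u := by
    rw [← integral_div]
    exact integral_congr_ae (hcu.mono fun i hi => by dsimp only; rw [hi])
  -- sqrt f integrable
  have hsqint : Integrable (fun i => Real.sqrt (f i)) Pi := integrable_sqrt' hfm hf0 hint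
  set J := ∫ i, Real.sqrt (f i) ∂Pi with hJdef
  have hJ : J ≤ Real.sqrt A := integral_sqrt_le Pi hfm hf0 hint
  -- expansion of the squared Hellinger integrand
  have hexp_pt : ∀ i, (Real.sqrt (f i) - Real.sqrt b) ^ 2
      = f i + b - 2 * Real.sqrt b * Real.sqrt (f i) := by
    intro i
    rw [sub_sq, Real.sq_sqrt (hf0 i), Real.sq_sqrt hb]
    ring
  have hint2 : Integrable (fun i => (Real.sqrt (f i) - Real.sqrt b) ^ 2) Pi := by
    have h' : Integrable (fun i => (f i + b) - (2 * Real.sqrt b) * Real.sqrt (f i)) Pi :=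
      (hint.add (integrable_const b)).sub (hsqint.const_mul _)
    exact h'.congr (Eventually.of_forall fun i => by dsimp only; rw [hexp_pt i])
  have hexp : ∫ i, (Real.sqrt (f i) - Real.sqrt b) ^ 2 ∂Pi
      = A + b - 2 * Real.sqrt b * J := by
    calc ∫ i, (Real.sqrt (f i) - Real.sqrt b) ^ 2 ∂Pi
        = ∫ i, (f i + b) - (2 * Real.sqrt b) * Real.sqrt (f i) ∂Pi := by
          refine integral_congr_ae (Eventually.of_forall fun i => ?_)
          dsimp only; rw [hexp_pt i]
      _ = (∫ i, f i + b ∂Pi) - ∫ i, (2 * Real.sqrt b) * Real.sqrt (f i) ∂Pi :=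
          integral_sub (hint.add (integrable_const b)) (hsqint.const_mul _)
      _ = (A + b) - 2 * Real.sqrt b * J := by
          rw [integral_add hint (integrable_const b), integral_const_mul, integral_const]
          simp [hA, hJdef]
      _ = A + b - 2 * Real.sqrt b * J := by ring
  -- main real inequality
  have h1 : (Real.sqrt A - Real.sqrt b) ^ 2
      ≤ ∫ i, (Real.sqrt (f i) - Real.sqrt b) ^ 2 ∂Pi := by
    rw [hexp, sub_sq, Real.sq_sqrt hA0, Real.sq_sqrt hb]
    nlinarith [mul_le_mul_of_nonneg_left hJ (Real.sqrt_nonneg b)]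
  -- LHS simplification
  have hL : u * (Real.sqrt (∫ i, f i / c i ∂Pi) - Real.sqrt (b / u)) ^ 2
      = (Real.sqrt A - Real.sqrt b) ^ 2 := by
    rw [hmixval, Real.sqrt_div hA0, Real.sqrt_div hb, div_sub_div_same, div_pow,
      Real.sq_sqrt hu]
    field_simp
  calc ENNReal.ofReal u *
      ENNReal.ofReal ((Real.sqrt (∫ i, f i / c i ∂Pi) - Real.sqrt (b / u)) ^ 2)
      = ENNReal.ofReal ((Real.sqrt A - Real.sqrt b) ^ 2) := by
        rw [← ENNReal.ofReal_mul hu, hL]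
    _ ≤ ENNReal.ofReal (∫ i, (Real.sqrt (f i) - Real.sqrt b) ^ 2 ∂Pi) :=
        ENNReal.ofReal_le_ofReal h1
    _ = ∫⁻ i, ENNReal.ofReal ((Real.sqrt (f i) - Real.sqrt b) ^ 2) ∂Pi :=
        ofReal_integral_eq_lintegral_ofReal hint2
          (Eventually.of_forall fun i => sq_nonneg _)

/-- Composite Cauchy–Schwarz / mixture / disintegration step: let `π`
be a joint probability density on `X × Y` with x-marginal `π_X` and conditionals
`π(y|x) = π(x,y)/π_X(x)`; let `q` be a measurably parameterized family of joint
probability densities, each with x-marginal equal to `π_X` μ-a.e., and let `Π` be a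
probability measure on the parameter space. With the mixture conditional density
`π_Π(y|x) = ∫ q_i(y|x) dΠ(i)` (where `q_i(y|x) = q_i(x,y)/q_{i,X}(x)`), one has
`∫ π_X(x) · H(π_Π(·|x), π(·|x)) dμ(x) ≤ ( ∫ H(q_i, π)² dΠ(i) )^{1/2}`. -/
theorem stmt10 {X Y Q : Type*}
    [MeasurableSpace X] [MeasurableSpace Y] [MeasurableSpace Q]
    (μ : Measure X) (ν : Measure Y) [SigmaFinite μ] [SigmaFinite ν]
    (ptrue : X × Y → ℝ)
    (hπm : Measurable ptrue) (hπ0 : ∀ z, 0 ≤ ptrue z)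
    (hπ1 : ∫ z, ptrue z ∂(μ.prod ν) = 1)
    (pX : X → ℝ) (hpX : ∀ x, pX x = ∫ y, ptrue (x, y) ∂ν)
    (q : Q → X × Y → ℝ)
    (hqm : Measurable (Function.uncurry q))
    (hq0 : ∀ i z, 0 ≤ q i z)
    (hq1 : ∀ i, ∫ z, q i z ∂(μ.prod ν) = 1)
    (hqmarg : ∀ i, ∀ᵐ x ∂μ, (∫ y, q i (x, y) ∂ν) = pX x)
    (Pi : Measure Q) [IsProbabilityMeasure Pi] :
    ∫ x, pX x *
        hell ν (fun y => ∫ i, q i (x, y) / (∫ y', q i (x, y') ∂ν) ∂Pi)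
               (fun y => ptrue (x, y) / pX x) ∂μ
      ≤ Real.sqrt (∫ i, hell (μ.prod ν) (q i) ptrue ^ 2 ∂Pi) := by
  simp only [hell]
  set m : Measure (X × Y) := μ.prod ν with hm
  -- basic integrability facts
  have hπint : Integrable ptrue m := by
    by_contra hc
    rw [integral_undef hc] at hπ1; norm_num at hπ1
  have hqint : ∀ i, Integrable (q i) m := by
    intro i
    by_contra hc
    have h := hq1 i
    rw [integral_undef hc] at h; norm_num at h
  have hpX0 : ∀ x, 0 ≤ pX x := fun x => (hpX x) ▸ integral_nonneg fun y => hπ0 _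
  have hpXm : Measurable pX := by
    have h : pX = fun x => ∫ y, ptrue (x, y) ∂ν := funext hpX
    rw [h]
    exact hπm.stronglyMeasurable.integral_prod_right'.measurable
  -- measurability of the conditional-normalisation and mixture
  have hcm : Measurable fun p : Q × X => ∫ y, q p.1 (p.2, y) ∂ν := by
    have hG : Measurable fun p : (Q × X) × Y => q p.1.1 (p.1.2, p.2) :=
      hqm.comp ((measurable_fst.fst).prodMk ((measurable_fst.snd).prodMk measurable_snd))
    exact hG.stronglyMeasurable.integral_prod_right'.measurable
  have hmixm : Measurable fun z : X × Y => ∫ i, q i z / (∫ y', q i (z.1, y') ∂ν) ∂Pi := by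
    have hF : Measurable fun p : (X × Y) × Q => q p.2 p.1 / (∫ y', q p.2 (p.1.1, y') ∂ν) :=
      (hqm.comp (measurable_snd.prodMk measurable_fst)).div
        (hcm.comp (measurable_snd.prodMk (measurable_fst.fst)))
    exact hF.stronglyMeasurable.integral_prod_right'.measurable
  have hcondm : Measurable fun z : X × Y => ptrue z / pX z.1 :=
    hπm.div (hpXm.comp measurable_fst)
  have hWm0 : Measurable fun z : X × Y =>
      ((Real.sqrt (∫ i, q i z / (∫ y', q i (z.1, y') ∂ν) ∂Pi)
        - Real.sqrt (ptrue z / pX z.1)) ^ 2) :=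
    (hmixm.sqrt.sub hcondm.sqrt).pow_const 2
  set W : X × Y → ℝ≥0∞ := fun z => ENNReal.ofReal
      ((Real.sqrt (∫ i, q i z / (∫ y', q i (z.1, y') ∂ν) ∂Pi)
        - Real.sqrt (ptrue z / pX z.1)) ^ 2) with hWdef
  have hWm : Measurable W := hWm0.ennreal_ofReal
  set hfun : X → ℝ := fun x => Real.sqrt (∫ z, (Real.sqrt
      (∫ i, q i (x, z) / (∫ y', q i (x, y') ∂ν) ∂Pi)
      - Real.sqrt (ptrue (x, z) / pX x)) ^ 2 ∂ν) with hhdef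
  have hhm : Measurable hfun := by
    rw [hhdef]
    exact (hWm0.stronglyMeasurable.integral_prod_right'.measurable).sqrt
  show ∫ x, pX x * hfun x ∂μ
      ≤ Real.sqrt (∫ i, Real.sqrt (∫ z, (Real.sqrt (q i z) - Real.sqrt (ptrue z)) ^ 2 ∂m) ^ 2 ∂Pi)
  -- lintegral identities
  have hπl : ∫⁻ z, ENNReal.ofReal (ptrue z) ∂m = 1 := by
    rw [← ofReal_integral_eq_lintegral_ofReal hπint (Eventually.of_forall hπ0), hπ1,
      ENNReal.ofReal_one]
  have hql : ∀ i, ∫⁻ z, ENNReal.ofReal (q i z) ∂m = 1 := fun i => by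
    rw [← ofReal_integral_eq_lintegral_ofReal (hqint i) (Eventually.of_forall (hq0 i)), hq1 i,
      ENNReal.ofReal_one]
  set Lam : X → ℝ≥0∞ := fun x => ∫⁻ y, ENNReal.ofReal (ptrue (x, y)) ∂ν with hLamdef
  have hLamm : Measurable Lam := hπm.ennreal_ofReal.lintegral_prod_right'
  have hLamint : ∫⁻ x, Lam x ∂μ = 1 := by
    rw [hLamdef, ← lintegral_prod _ hπm.ennreal_ofReal.aemeasurable]
    exact hπl
  have hpXeq : ∀ x, pX x = (Lam x).toReal := fun x => by
    rw [hpX x, integral_eq_lintegral_of_nonneg_ae (Eventually.of_forall fun y => hπ0 _)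
      (hπm.comp measurable_prodMk_left).aestronglyMeasurable]
  have hLamae : ∀ᵐ x ∂μ, Lam x < ⊤ := ae_lt_top hLamm (by rw [hLamint]; exact one_ne_top)
  have hPeq : ∀ᵐ x ∂μ, ENNReal.ofReal (pX x) = Lam x :=
    hLamae.mono fun x hx => by rw [hpXeq x, ENNReal.ofReal_toReal hx.ne]
  have hPint : ∫⁻ x, ENNReal.ofReal (pX x) ∂μ = 1 := by
    rw [lintegral_congr_ae hPeq]; exact hLamint
  -- marginal condition, a.e. jointly
  have hcmeq : ∀ᵐ x ∂μ, ∀ᵐ i ∂Pi, (∫ y, q i (x, y) ∂ν) = pX x := by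
    have hms : MeasurableSet {p : Q × X | (∫ y, q p.1 (p.2, y) ∂ν) = pX p.2} :=
      measurableSet_eq_fun hcm (hpXm.comp measurable_snd)
    exact (Measure.ae_ae_comm hms).1 (Eventually.of_forall hqmarg)
  have hmarg_z : ∀ᵐ z ∂m, ∀ᵐ i ∂Pi, (∫ y, q i (z.1, y) ∂ν) = pX z.1 :=
    Measure.quasiMeasurePreserving_fst.ae hcmeq
  -- finiteness of the fiberwise parameter integral
  have hVqm : Measurable fun p : (X × Y) × Q => ENNReal.ofReal (q p.2 p.1) :=
    (hqm.comp (measurable_snd.prodMk measurable_fst)).ennreal_ofReal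
  have hfin_z : ∀ᵐ z ∂m, (∫⁻ i, ENNReal.ofReal (q i z) ∂Pi) < ⊤ := by
    refine ae_lt_top hVqm.lintegral_prod_right' ?_
    rw [lintegral_lintegral_swap hVqm.aemeasurable]
    rw [lintegral_congr fun i => hql i]
    simp
  -- pointwise core inequality
  have hcore : ∀ᵐ z ∂m, ENNReal.ofReal (pX z.1) * W z
      ≤ ∫⁻ i, ENNReal.ofReal ((Real.sqrt (q i z) - Real.sqrt (ptrue z)) ^ 2) ∂Pi := by
    filter_upwards [hmarg_z, hfin_z] with z hz1 hz2
    have hfm : Measurable fun i => q i z := hqm.comp (measurable_id.prodMk measurable_const)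
    exact mix_step Pi (hπ0 z) (hpX0 z.1) (fun i => hq0 i z) hfm hz1 hz2
  -- joint squared-Hellinger integrals
  set R : Q → ℝ≥0∞ :=
    fun i => ∫⁻ z, ENNReal.ofReal ((Real.sqrt (q i z) - Real.sqrt (ptrue z)) ^ 2) ∂m with hRdef
  have hsqjm : Measurable fun p : Q × (X × Y) =>
      ENNReal.ofReal ((Real.sqrt (q p.1 p.2) - Real.sqrt (ptrue p.2)) ^ 2) :=
    ((hqm.sqrt.sub ((hπm.comp measurable_snd).sqrt)).pow_const 2).ennreal_ofReal
  have hRm : Measurable R := hsqjm.lintegral_prod_right'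
  have hR4 : ∀ i, R i ≤ 4 := by
    intro i
    have hqizE : Measurable fun z => ENNReal.ofReal (q i z) :=
      (hqm.comp (measurable_const.prodMk measurable_id)).ennreal_ofReal
    have hpt : ∀ z, ENNReal.ofReal ((Real.sqrt (q i z) - Real.sqrt (ptrue z)) ^ 2)
        ≤ 2 * ENNReal.ofReal (q i z) + 2 * ENNReal.ofReal (ptrue z) := by
      intro z
      calc ENNReal.ofReal ((Real.sqrt (q i z) - Real.sqrt (ptrue z)) ^ 2)
          ≤ ENNReal.ofReal (2 * q i z + 2 * ptrue z) := by
            refine ENNReal.ofReal_le_ofReal ?_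
            nlinarith [Real.sq_sqrt (hq0 i z), Real.sq_sqrt (hπ0 z),
              mul_nonneg (Real.sqrt_nonneg (q i z)) (Real.sqrt_nonneg (ptrue z))]
        _ = 2 * ENNReal.ofReal (q i z) + 2 * ENNReal.ofReal (ptrue z) := by
            rw [ENNReal.ofReal_add (mul_nonneg (by norm_num) (hq0 i z))
              (mul_nonneg (by norm_num) (hπ0 z)),
              ENNReal.ofReal_mul (by norm_num : (0:ℝ) ≤ 2),
              ENNReal.ofReal_mul (by norm_num : (0:ℝ) ≤ 2)]
            norm_num
    calc R i ≤ ∫⁻ z, (2 * ENNReal.ofReal (q i z) + 2 * ENNReal.ofReal (ptrue z)) ∂m :=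
          lintegral_mono hpt
      _ = 2 * 1 + 2 * 1 := by
          rw [lintegral_add_left (hqizE.const_mul 2),
            lintegral_const_mul' _ _ (by norm_num : (2:ℝ≥0∞) ≠ ⊤),
            lintegral_const_mul' _ _ (by norm_num : (2:ℝ≥0∞) ≠ ⊤), hql i, hπl]
      _ = 4 := by norm_num
  have hRfin : ∀ i, R i ≠ ⊤ := fun i => ((hR4 i).trans_lt (by norm_num)).ne
  have hsqr : ∀ i, Measurable fun z : X × Y => (Real.sqrt (q i z) - Real.sqrt (ptrue z)) ^ 2 :=
    fun i => (((hqm.comp (measurable_const.prodMk measurable_id)).sqrt).sub hπm.sqrt).pow_const 2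
  have hhellR : ∀ i, ENNReal.ofReal
      (Real.sqrt (∫ z, (Real.sqrt (q i z) - Real.sqrt (ptrue z)) ^ 2 ∂m) ^ 2) = R i := by
    intro i
    have hint_eq : ∫ z, (Real.sqrt (q i z) - Real.sqrt (ptrue z)) ^ 2 ∂m = (R i).toReal := by
      rw [integral_eq_lintegral_of_nonneg_ae (Eventually.of_forall fun z => sq_nonneg _)
        (hsqr i).aestronglyMeasurable]
    rw [hint_eq, Real.sq_sqrt ENNReal.toReal_nonneg, ENNReal.ofReal_toReal (hRfin i)]
  -- rewrite the right-hand side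
  have hRHSm : Measurable fun i => ∫ z, (Real.sqrt (q i z) - Real.sqrt (ptrue z)) ^ 2 ∂m := by
    have h : Measurable fun p : Q × (X × Y) => (Real.sqrt (q p.1 p.2) - Real.sqrt (ptrue p.2)) ^ 2 :=
      (hqm.sqrt.sub ((hπm.comp measurable_snd).sqrt)).pow_const 2
    exact h.stronglyMeasurable.integral_prod_right'.measurable
  have hRHS : Real.sqrt (∫ i, Real.sqrt (∫ z, (Real.sqrt (q i z) - Real.sqrt (ptrue z)) ^ 2 ∂m) ^ 2 ∂Pi)
      = ((∫⁻ i, R i ∂Pi) ^ (1/2 : ℝ)).toReal := by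
    rw [integral_eq_lintegral_of_nonneg_ae (Eventually.of_forall fun i => sq_nonneg _)
      (hRHSm.sqrt.pow_const 2).aestronglyMeasurable]
    rw [lintegral_congr fun i => hhellR i, Real.sqrt_eq_rpow, ENNReal.toReal_rpow]
  -- rewrite the left-hand side
  have hLHS : ∫ x, pX x * hfun x ∂μ = (∫⁻ x, ENNReal.ofReal (pX x * hfun x) ∂μ).toReal :=
    integral_eq_lintegral_of_nonneg_ae
      (Eventually.of_forall fun x => mul_nonneg (hpX0 x) (Real.sqrt_nonneg _))
      (hpXm.mul hhm).aestronglyMeasurable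
  -- Cauchy–Schwarz in x
  set K : ℝ≥0∞ := ∫⁻ x, ENNReal.ofReal (pX x) * ENNReal.ofReal (hfun x) ^ (2:ℝ) ∂μ with hKdef
  have hHolder : (∫⁻ x, ENNReal.ofReal (pX x * hfun x) ∂μ) ≤ K ^ (1/2 : ℝ) := by
    have hfm2 : AEMeasurable (fun x => ENNReal.ofReal (pX x) ^ (1/2:ℝ)) μ :=
      (hpXm.ennreal_ofReal.pow_const _).aemeasurable
    have hgm2 : AEMeasurable
        (fun x => ENNReal.ofReal (pX x) ^ (1/2:ℝ) * ENNReal.ofReal (hfun x)) μ :=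
      ((hpXm.ennreal_ofReal.pow_const _).mul hhm.ennreal_ofReal).aemeasurable
    have h := ENNReal.lintegral_mul_le_Lp_mul_Lq μ two_conj hfm2 hgm2
    have e1 : ∀ x, ENNReal.ofReal (pX x * hfun x)
        = ENNReal.ofReal (pX x) ^ (1/2:ℝ) *
          (ENNReal.ofReal (pX x) ^ (1/2:ℝ) * ENNReal.ofReal (hfun x)) := by
      intro x
      rw [← mul_assoc, ← ENNReal.rpow_add_of_nonneg _ _ (by norm_num) (by norm_num)]
      norm_num [ENNReal.ofReal_mul (hpX0 x)]
    calc ∫⁻ x, ENNReal.ofReal (pX x * hfun x) ∂μ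
        = ∫⁻ x, (fun x => ENNReal.ofReal (pX x) ^ (1/2:ℝ)) x *
            (fun x => ENNReal.ofReal (pX x) ^ (1/2:ℝ) * ENNReal.ofReal (hfun x)) x ∂μ :=
          lintegral_congr fun x => e1 x
      _ ≤ (∫⁻ x, (ENNReal.ofReal (pX x) ^ (1/2:ℝ)) ^ (2:ℝ) ∂μ) ^ (1/(2:ℝ)) *
          (∫⁻ x, (ENNReal.ofReal (pX x) ^ (1/2:ℝ) * ENNReal.ofReal (hfun x)) ^ (2:ℝ) ∂μ)
            ^ (1/(2:ℝ)) := h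
      _ = (1:ℝ≥0∞) ^ (1/(2:ℝ)) * K ^ (1/(2:ℝ)) := by
          congr 1
          · congr 1
            rw [← hPint]
            refine lintegral_congr fun x => ?_
            rw [← ENNReal.rpow_mul]
            norm_num
          · congr 1
            rw [hKdef]
            refine lintegral_congr fun x => ?_
            rw [ENNReal.mul_rpow_of_nonneg _ _ (by norm_num : (0:ℝ) ≤ 2), ← ENNReal.rpow_mul]
            norm_num
      _ = K ^ (1/2 : ℝ) := by rw [ENNReal.one_rpow, one_mul]
  -- bound K by the double lintegral of the conditional Hellinger integrand
  have hK2 : K ≤ ∫⁻ z, ENNReal.ofReal (pX z.1) * W z ∂m := by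
    have step1 : K ≤ ∫⁻ x, ENNReal.ofReal (pX x) * (∫⁻ y, W (x, y) ∂ν) ∂μ := by
      rw [hKdef]
      refine lintegral_mono fun x => mul_le_mul_right ?_ _
      have ht0 : 0 ≤ ∫ z, (Real.sqrt (∫ i, q i (x, z) / (∫ y', q i (x, y') ∂ν) ∂Pi)
          - Real.sqrt (ptrue (x, z) / pX x)) ^ 2 ∂ν := integral_nonneg fun z => sq_nonneg _
      have e2 : ENNReal.ofReal (hfun x) ^ (2:ℝ) = ENNReal.ofReal (hfun x ^ 2) := by
        rw [show hfun x ^ 2 = hfun x ^ (2:ℝ) from by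
          rw [show ((2:ℝ)) = ((2:ℕ):ℝ) by norm_num, Real.rpow_natCast]]
        exact (ENNReal.ofReal_rpow_of_nonneg
          (show (0:ℝ) ≤ hfun x from Real.sqrt_nonneg _) (by norm_num : (0:ℝ) ≤ 2))
      have e3 : hfun x ^ 2 = ∫ z, (Real.sqrt (∫ i, q i (x, z) / (∫ y', q i (x, y') ∂ν) ∂Pi)
          - Real.sqrt (ptrue (x, z) / pX x)) ^ 2 ∂ν := by
        rw [hhdef]
        exact Real.sq_sqrt ht0
      have e4 : ∫ z, (Real.sqrt (∫ i, q i (x, z) / (∫ y', q i (x, y') ∂ν) ∂Pi)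
          - Real.sqrt (ptrue (x, z) / pX x)) ^ 2 ∂ν = (∫⁻ y, W (x, y) ∂ν).toReal := by
        rw [integral_eq_lintegral_of_nonneg_ae (Eventually.of_forall fun z => sq_nonneg _)
          ((hWm0.comp measurable_prodMk_left).aestronglyMeasurable)]
      rw [e2, e3, e4]
      exact ENNReal.ofReal_toReal_le
    have step2 : ∫⁻ x, ENNReal.ofReal (pX x) * (∫⁻ y, W (x, y) ∂ν) ∂μ
        = ∫⁻ x, ∫⁻ y, ENNReal.ofReal (pX x) * W (x, y) ∂ν ∂μ :=
      lintegral_congr fun x => (lintegral_const_mul' _ _ ENNReal.ofReal_ne_top).symm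
    have step3 : ∫⁻ x, ∫⁻ y, ENNReal.ofReal (pX x) * W (x, y) ∂ν ∂μ
        = ∫⁻ z, ENNReal.ofReal (pX z.1) * W z ∂m :=
      (lintegral_prod _ ((hpXm.comp measurable_fst).ennreal_ofReal.mul hWm).aemeasurable).symm
    rw [← step3, ← step2]
    exact step1
  have hK3 : ∫⁻ z, ENNReal.ofReal (pX z.1) * W z ∂m ≤ ∫⁻ i, R i ∂Pi := by
    calc ∫⁻ z, ENNReal.ofReal (pX z.1) * W z ∂m
        ≤ ∫⁻ z, ∫⁻ i, ENNReal.ofReal ((Real.sqrt (q i z) - Real.sqrt (ptrue z)) ^ 2) ∂Pi ∂m :=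
          lintegral_mono_ae hcore
      _ = ∫⁻ i, ∫⁻ z, ENNReal.ofReal ((Real.sqrt (q i z) - Real.sqrt (ptrue z)) ^ 2) ∂m ∂Pi :=
          lintegral_lintegral_swap (hsqjm.comp measurable_swap).aemeasurable
      _ = ∫⁻ i, R i ∂Pi := rfl
  have hRint : ∫⁻ i, R i ∂Pi ≤ 4 := by
    calc ∫⁻ i, R i ∂Pi ≤ ∫⁻ _, (4:ℝ≥0∞) ∂Pi := lintegral_mono hR4
      _ = 4 := by simp
  rw [hLHS, hRHS]
  refine ENNReal.toReal_mono ?_ ?_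
  · exact ENNReal.rpow_ne_top_of_nonneg (by norm_num)
      ((hRint.trans_lt (by norm_num)).ne)
  · exact hHolder.trans (ENNReal.rpow_le_rpow (hK2.trans hK3) (by norm_num))
end
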